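/- The element 1 ∈ B_0 is a two-sided unit for the product ⋆: for every f ∈ F_p (p ≥ 0), 1 ⋆ f = f ⋆ 1 = f. -/

import Mathlib

open Classical MvPolynomial Finsupp TensorProduct

set_option maxHeartbeats 1600000

noncomputable section

namespace EdgeRes

/-- A "cell" `(σ, τ)`: a pair of finite sets of vertices, representing the symbol `[σ|τ]`. -/
abbrev Cell (n : ℕ) := Finset (Fin n) × Finset (Fin n)

/-- The cointerval graph of the intervals `[a i, b i]`: distinct vertices are adjacent
iff the corresponding closed intervals are disjoint. -/
def cigraph (n : ℕ) (a b : Fin n → ℝ) : SimpleGraph (Fin n) where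
  Adj i j := i ≠ j ∧ Disjoint (Set.Icc (a i) (b i)) (Set.Icc (a j) (b j))
  symm := by constructor; intro i j h; exact ⟨h.1.symm, h.2.symm⟩
  loopless := by constructor; intro i h; exact h.1 rfl

variable {n : ℕ}

/-- The homological degree of a cell: `|σ| + |τ| - 1`. -/
def cellDeg (e : Cell n) : ℕ := e.1.card + e.2.card - 1

/-- `e = (σ, τ)` is a basis cell: either the degree-0 cell `(∅, ∅)` (representing `1 ∈ B₀`),
or `σ, τ` are disjoint and nonempty, `max σ < min τ`, and every `i ∈ σ` is adjacent
to `min τ` in `G`. -/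
def IsBasisCell (G : SimpleGraph (Fin n)) (e : Cell n) : Prop :=
  e = (∅, ∅) ∨
  (e.1.Nonempty ∧ e.2.Nonempty ∧ Disjoint e.1 e.2 ∧
   (∀ i ∈ e.1, ∀ j ∈ e.2, i < j) ∧
   (∀ i ∈ e.1, ∀ j ∈ e.2, (∀ j' ∈ e.2, j ≤ j') → G.Adj i j))

/-- `e ∈ B_d`. -/
def InB (G : SimpleGraph (Fin n)) (d : ℕ) (e : Cell n) : Prop :=
  IsBasisCell G e ∧ cellDeg e = d

/-- The underlying module of the resolution: the free `S`-module on all cells (the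
resolution `F` is the submodule family spanned by the basis cells of each degree). -/
abbrev Ftot (n : ℕ) (k : Type) [Field k] := Cell n →₀ MvPolynomial (Fin n) k

variable (G : SimpleGraph (Fin n)) (k : Type) [Field k]

/-- The basis vector corresponding to a cell, where symbols that are not genuine
basis elements are interpreted as `0`. -/
def sym (e : Cell n) : Ftot n k :=
  if IsBasisCell G e then Finsupp.single e 1 else 0

/-- The differential on a basis cell: `d[{i}|{j}] = x_i x_j`, and for `|σ|+|τ| ≥ 3`,
`d[σ|τ] = Σ_{i∈σ} (−1)^{|τ|+|{j∈σ : j>i}|} x_i [σ∖i|τ] + Σ_{i∈τ} (−1)^{|{j∈τ : j>i}|} x_i [σ|τ∖i]`. -/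
def diffCell (e : Cell n) : Ftot n k :=
  if IsBasisCell G e then
    if e.1.card + e.2.card = 2 then
      (∏ i ∈ e.1 ∪ e.2, (X i : MvPolynomial (Fin n) k)) • sym G k ((∅, ∅) : Cell n)
    else if 3 ≤ e.1.card + e.2.card then
      (∑ i ∈ e.1,
        (((-1 : MvPolynomial (Fin n) k) ^ (e.2.card + (e.1.filter fun j => i < j).card)) * X i) •
          sym G k (e.1.erase i, e.2))
      + (∑ i ∈ e.2,
        (((-1 : MvPolynomial (Fin n) k) ^ ((e.2.filter fun j => i < j).card)) * X i) •
          sym G k (e.1, e.2.erase i))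
    else 0
  else 0

/-- The differential, as an `S`-linear endomorphism of the total module (it is zero in
degree `0` and on non-basis cells). -/
def Dmap : Ftot n k →ₗ[MvPolynomial (Fin n) k] Ftot n k :=
  Finsupp.lsum ℕ fun e => LinearMap.smulRight LinearMap.id (diffCell G k e)

/-- The submodule `F_d`: the span of the basis cells in `B_d`.  (`F` is the direct sum of
these, and `F_0 = S·[∅|∅] ≅ S`.) -/
def Fsub (d : ℕ) : Submodule (MvPolynomial (Fin n) k) (Ftot n k) :=
  Submodule.span _ {f : Ftot n k | ∃ e : Cell n, InB G d e ∧ f = Finsupp.single e 1}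

/-- The edge ideal `I_G`, generated by the `x_i x_j` for edges `ij` of `G`. -/
def edgeIdeal : Ideal (MvPolynomial (Fin n) k) :=
  Ideal.span {m | ∃ i j : Fin n, G.Adj i j ∧ m = X i * X j}

/-- The irrelevant maximal ideal `(x_1, …, x_n)`. -/
def irrIdeal (n : ℕ) (k : Type) [Field k] : Ideal (MvPolynomial (Fin n) k) :=
  Ideal.span (Set.range fun i : Fin n => (X i : MvPolynomial (Fin n) k))

/-- The set of pairs `(i, j)` with `i < j`, `ij ∈ E(G)`, and `x_i x_j ∣ x^α`; i.e. the
elements `[{i}|{j}]` of `B₁` whose monomial divides `x^α`. -/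
def DvdSet (α : Fin n →₀ ℕ) : Finset (Fin n × Fin n) :=
  Finset.univ.filter fun p => p.1 < p.2 ∧ G.Adj p.1 p.2 ∧ 1 ≤ α p.1 ∧ 1 ≤ α p.2

/-- `c` on a monomial `x^α ∈ F_0 = S`: zero if `x^α ∉ I_G`; otherwise
`(x^α/(x_i x_j))·[{i}|{j}]` for the `≺`-minimal `[{i}|{j}] ∈ B₁` with `x_i x_j ∣ x^α`
(i.e. `j` is largest possible and then `i` smallest possible). -/
def cZero (α : Fin n →₀ ℕ) : Ftot n k :=
  if h : (DvdSet G α).Nonempty then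
    let t := ((DvdSet G α).image Prod.snd).max' (h.image _)
    if h2 : ((((DvdSet G α).filter fun p => p.2 = t)).image Prod.fst).Nonempty then
      let s := ((((DvdSet G α).filter fun p => p.2 = t)).image Prod.fst).min' h2
      (monomial (α - Finsupp.single s 1 - Finsupp.single t 1) (1 : k)) • sym G k ({s}, {t})
    else 0
  else 0

/-- `C₁ = {i ∈ supp α : i > max τ}`. -/
def C1set (τ : Finset (Fin n)) (α : Fin n →₀ ℕ) : Finset (Fin n) :=
  α.support.filter fun i => ∀ j ∈ τ, j < i

/-- `C₂ = {i ∈ supp α : i < min σ, {i, min τ} ∈ E(G)}`. -/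
def C2set (σ τ : Finset (Fin n)) (α : Fin n →₀ ℕ) : Finset (Fin n) :=
  α.support.filter fun i =>
    (∀ s ∈ σ, i < s) ∧ ∀ j ∈ τ, (∀ j' ∈ τ, j ≤ j') → G.Adj i j

/-- `C₃ = {i ∈ supp α : i < min σ, i < max supp α, {i, max supp α} ∈ E(G)}`. -/
def C3set (σ : Finset (Fin n)) (α : Fin n →₀ ℕ) : Finset (Fin n) :=
  α.support.filter fun i =>
    (∀ s ∈ σ, i < s) ∧ ∀ m ∈ α.support, (∀ m' ∈ α.support, m' ≤ m) → (i < m ∧ G.Adj i m)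

/-- The value of the contracting homotopy `c` on the `k`-basis vector `x^α·e`. -/
def cMono (e : Cell n) (α : Fin n →₀ ℕ) : Ftot n k :=
  if IsBasisCell G e then
    if hτ : e.2.Nonempty then
      if e.2.card = 1 then
        -- `τ = {t}`
        let t := e.2.max' hτ
        if h1 : (C1set e.2 α).Nonempty then
          let m1 := (C1set e.2 α).max' h1
          (monomial (α - Finsupp.single m1 1) (1 : k)) • sym G k (e.1, insert m1 e.2)
          + (if h3 : (C3set G e.1 α).Nonempty then
              let m3 := (C3set G e.1 α).min' h3
              ((-1 : MvPolynomial (Fin n) k) ^ (e.1.card + 1)) •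
                ((monomial (α + Finsupp.single t 1 - Finsupp.single m1 1 - Finsupp.single m3 1)
                    (1 : k)) • sym G k (insert m3 e.1, ({m1} : Finset (Fin n))))
            else 0)
        else
          if h2 : (C2set G e.1 e.2 α).Nonempty then
            let m2 := (C2set G e.1 e.2 α).min' h2
            ((-1 : MvPolynomial (Fin n) k) ^ (e.1.card + 1)) •
              ((monomial (α - Finsupp.single m2 1) (1 : k)) • sym G k (insert m2 e.1, e.2))
          else 0
      else
        -- `|τ| ≥ 2`
        if h1 : (C1set e.2 α).Nonempty then
          let m1 := (C1set e.2 α).max' h1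
          (monomial (α - Finsupp.single m1 1) (1 : k)) • sym G k (e.1, insert m1 e.2)
        else 0
    else cZero G k α  -- the degree-0 basis cell `(∅, ∅)`
  else 0

/-- The `k`-basis of the total module, indexed by pairs (cell, monomial exponent). -/
def FBasis (n : ℕ) (k : Type) [Field k] :
    Module.Basis ((_ : Cell n) × (Fin n →₀ ℕ)) k (Ftot n k) :=
  Finsupp.basis fun _ => MvPolynomial.basisMonomials (Fin n) k

/-- The contracting homotopy `c`, as a `k`-linear endomorphism of the total module. -/
def Cmap : Ftot n k →ₗ[k] Ftot n k :=
  (FBasis n k).constr ℕ fun p => cMono G k p.1 p.2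

/-- The `S`-bilinear extension of a map defined on pairs of cells. -/
def biext (b : Cell n → Cell n → Ftot n k) (f g : Ftot n k) : Ftot n k :=
  ∑ e₁ ∈ f.support, ∑ e₂ ∈ g.support, (f e₁ * g e₂) • b e₁ e₂

/-- The product of two basis cells, defined recursively (with fuel, which suffices as each
recursive step lowers the total degree): `1 ⋆ 1 = 1`, and for `p + q ≥ 1`,
`e₁ ⋆ e₂ = c((d e₁) ⋆ e₂) + (−1)^p c(e₁ ⋆ (d e₂))`. -/
def bstar : ℕ → Cell n → Cell n → Ftot n k
  | 0, _, _ => 0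
  | N + 1, e₁, e₂ =>
    if cellDeg e₁ + cellDeg e₂ = 0 then Finsupp.single ((∅, ∅) : Cell n) 1
    else
      Cmap G k (biext k (fun a b => bstar N a b) (Dmap G k (Finsupp.single e₁ 1)) (Finsupp.single e₂ 1))
      + ((-1 : MvPolynomial (Fin n) k) ^ cellDeg e₁) •
          Cmap G k (biext k (fun a b => bstar N a b) (Finsupp.single e₁ 1) (Dmap G k (Finsupp.single e₂ 1)))

/-- The product `⋆` on the resolution, extended `S`-bilinearly from basis cells. -/
def pstar (f g : Ftot n k) : Ftot n k := biext k (bstar G k (4 * n + 4)) f g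

/-- The map `∂` on a basis cell: `∂[{i}|{j}] = x_i x_j`, and for `|σ|+|τ| ≥ 3`,
`∂[σ|τ] = x_{max τ}[σ|τ∖max τ] − (−1)^{|τ|+|σ|} x_{min σ}[σ∖min σ|τ]`. -/
def partialCell (e : Cell n) : Ftot n k :=
  if IsBasisCell G e then
    if e.1.card + e.2.card = 2 then
      (∏ i ∈ e.1 ∪ e.2, (X i : MvPolynomial (Fin n) k)) • sym G k ((∅, ∅) : Cell n)
    else if 3 ≤ e.1.card + e.2.card then
      if h1 : e.1.Nonempty then
        if h2 : e.2.Nonempty then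
          (X (e.2.max' h2) : MvPolynomial (Fin n) k) • sym G k (e.1, e.2.erase (e.2.max' h2))
          - ((-1 : MvPolynomial (Fin n) k) ^ (e.2.card + e.1.card)) •
              ((X (e.1.min' h1) : MvPolynomial (Fin n) k) •
                sym G k (e.1.erase (e.1.min' h1), e.2))
        else 0
      else 0
    else 0
  else 0

/-- The map `∂`, as an `S`-linear endomorphism of the total module. -/
def Pmap : Ftot n k →ₗ[MvPolynomial (Fin n) k] Ftot n k :=
  Finsupp.lsum ℕ fun e => LinearMap.smulRight LinearMap.id (partialCell G k e)

/-- The `k`-linear projection `π` of `S` fixing each monomial not in `I_G` and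
annihilating each monomial in `I_G`. -/
def piMap : MvPolynomial (Fin n) k →ₗ[k] MvPolynomial (Fin n) k :=
  (MvPolynomial.basisMonomials (Fin n) k).constr ℕ fun α =>
    if monomial α (1 : k) ∈ edgeIdeal G k then 0 else monomial α (1 : k)

/-- The `ℕⁿ`-multidegree of the basis vector `x^α [σ|τ]`: `α + Σ_{i ∈ σ∪τ} eᵢ`. -/
def mdeg (e : Cell n) (α : Fin n →₀ ℕ) : Fin n →₀ ℕ :=
  α + ∑ i ∈ e.1 ∪ e.2, Finsupp.single i 1

/-- The `μ`-homogeneous component of the resolution (as a `k`-subspace). -/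
def Hsub (μ : Fin n →₀ ℕ) : Submodule k (Ftot n k) :=
  Submodule.span k {f : Ftot n k |
    ∃ (e : Cell n) (α : Fin n →₀ ℕ), IsBasisCell G e ∧ mdeg e α = μ ∧
      f = Finsupp.single e (monomial α (1 : k))}

/-! The unit property reduces to the identity `c (d e) = e` for every basis cell `e` of positive
degree: since `d 1 = 0`, the recursion gives `1 ⋆ e = c (1 ⋆ d e)` and `e ⋆ 1 = c (d e ⋆ 1)`,
which by induction on the degree are `c (d e) = e`. That identity holds because, applied to
the terms `x_i [σ'|τ']` of `d [σ|τ]`, the homotopy `c` vanishes except on exactly one term,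
which it sends back to `[σ|τ]` with sign `+1`: the term removing `max τ` when `|τ| ≥ 2`, the
term removing `min σ` when `|τ| = 1`; in degree one, `c (x_s x_t) = [{s}|{t}]`. -/

lemma isBasisCell_empty : IsBasisCell G ((∅, ∅) : Cell n) := Or.inl rfl

lemma not_isBasisCell_of_snd_eq_empty {σ : Finset (Fin n)} (hσ : σ.Nonempty) :
    ¬ IsBasisCell G (σ, ∅) := by
  rintro (h | ⟨-, h, -⟩)
  · exact hσ.ne_empty (Prod.mk.inj h).1
  · exact Finset.not_nonempty_empty h

lemma two_le_card_of_isBasisCell {e : Cell n} (hb : IsBasisCell G e)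
    (hne : e ≠ ((∅, ∅) : Cell n)) : 2 ≤ e.1.card + e.2.card := by
  obtain ⟨hσ, hτ, -⟩ := hb.resolve_left hne
  have := hσ.card_pos
  have := hτ.card_pos
  omega

lemma IsBasisCell.erase_fst {σ τ : Finset (Fin n)} (hb : IsBasisCell G (σ, τ)) {i : Fin n}
    (hne : (σ.erase i).Nonempty) : IsBasisCell G (σ.erase i, τ) := by
  obtain ⟨-, hτ, hdisj, hlt, hadj⟩ := hb.resolve_left fun h => by
    simp_all [Prod.mk.injEq]
  exact Or.inr ⟨hne, hτ, Finset.disjoint_of_subset_left (Finset.erase_subset _ _) hdisj,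
    fun s hs => hlt s (Finset.mem_of_mem_erase hs),
    fun s hs => hadj s (Finset.mem_of_mem_erase hs)⟩

lemma IsBasisCell.erase_max'_snd {σ τ : Finset (Fin n)} (hb : IsBasisCell G (σ, τ))
    (hτ : τ.Nonempty) (hne : (τ.erase (τ.max' hτ)).Nonempty) :
    IsBasisCell G (σ, τ.erase (τ.max' hτ)) := by
  obtain ⟨hσ, -, hdisj, hlt, hadj⟩ := hb.resolve_left fun h => by
    simp_all [Prod.mk.injEq]
  refine Or.inr ⟨hσ, hne, Finset.disjoint_of_subset_right (Finset.erase_subset _ _) hdisj,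
    fun s hs j hj => hlt s hs j (Finset.mem_of_mem_erase hj),
    fun s hs j hj hmin => hadj s hs j (Finset.mem_of_mem_erase hj) fun j' hj' => ?_⟩
  by_cases hj'max : j' = τ.max' hτ
  · exact hj'max ▸ τ.le_max' j (Finset.mem_of_mem_erase hj)
  · exact hmin j' (Finset.mem_erase.mpr ⟨hj'max, hj'⟩)

lemma cellDeg_empty : cellDeg ((∅, ∅) : Cell n) = 0 := rfl

lemma cellDeg_lt (e : Cell n) : cellDeg e < 4 * n + 4 := by
  have h1 := (Finset.card_le_univ e.1).trans_eq (Finset.card_fin n)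
  have h2 := (Finset.card_le_univ e.2).trans_eq (Finset.card_fin n)
  simp only [cellDeg]
  omega

lemma sym_of_isBasisCell {e : Cell n} (h : IsBasisCell G e) :
    sym G k e = Finsupp.single e 1 := if_pos h

lemma sym_of_not_isBasisCell {e : Cell n} (h : ¬ IsBasisCell G e) : sym G k e = 0 := if_neg h

lemma sym_mem_supported {e : Cell n} {s : Set (Cell n)} (h : IsBasisCell G e → e ∈ s) :
    sym G k e ∈ Finsupp.supported (MvPolynomial (Fin n) k) (MvPolynomial (Fin n) k) s := by
  by_cases hb : IsBasisCell G e
  · rw [sym_of_isBasisCell G k hb]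
    exact Finsupp.single_mem_supported _ _ (h hb)
  · rw [sym_of_not_isBasisCell G k hb]
    exact zero_mem _

lemma Dmap_single (e : Cell n) (c : MvPolynomial (Fin n) k) :
    Dmap G k (Finsupp.single e c) = c • diffCell G k e := by
  simp [Dmap, Finsupp.lsum_single]

lemma diffCell_empty : diffCell G k ((∅, ∅) : Cell n) = 0 := by
  simp [diffCell]

lemma Cmap_single (e : Cell n) (α : Fin n →₀ ℕ) (c : k) :
    Cmap G k (Finsupp.single e (monomial α c)) = c • cMono G k e α := by
  have h : Finsupp.single e (monomial α c) = c • FBasis n k ⟨e, α⟩ := by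
    rw [FBasis, Finsupp.coe_basis, coe_basisMonomials, Finsupp.smul_single,
      MvPolynomial.smul_monomial, smul_eq_mul, mul_one]
  rw [h, map_smul, Cmap, Module.Basis.constr_basis]

lemma cMono_of_not_isBasisCell {e : Cell n} (hb : ¬ IsBasisCell G e) (α : Fin n →₀ ℕ) :
    cMono G k e α = 0 := by
  rw [cMono, if_neg hb]

lemma Cmap_X_smul_sym (i : Fin n) (e : Cell n) :
    Cmap G k ((X i : MvPolynomial (Fin n) k) • sym G k e) = cMono G k e (Finsupp.single i 1) := by
  by_cases hb : IsBasisCell G e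
  · rw [sym_of_isBasisCell G k hb, Finsupp.smul_single', mul_one, X, Cmap_single, one_smul]
  · rw [sym_of_not_isBasisCell G k hb, smul_zero, map_zero, cMono_of_not_isBasisCell G k hb]

lemma neg_one_pow_smul (m : ℕ) (x : Ftot n k) :
    ((-1 : MvPolynomial (Fin n) k) ^ m) • x = ((-1 : k) ^ m) • x := by
  rw [← algebraMap_smul (MvPolynomial (Fin n) k) ((-1 : k) ^ m) x]
  simp

lemma cMono_empty (α : Fin n →₀ ℕ) : cMono G k ((∅, ∅) : Cell n) α = cZero G k α := by
  rw [cMono, if_pos (isBasisCell_empty G), dif_neg Finset.not_nonempty_empty]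

lemma C1set_single (τ : Finset (Fin n)) (i : Fin n) :
    C1set τ (Finsupp.single i 1) = if ∀ j ∈ τ, j < i then {i} else ∅ := by
  rw [C1set, Finsupp.support_single _ one_ne_zero, Finset.filter_singleton]

lemma C2set_single (σ τ : Finset (Fin n)) (i : Fin n) :
    C2set G σ τ (Finsupp.single i 1) =
      if (∀ s ∈ σ, i < s) ∧ ∀ j ∈ τ, (∀ j' ∈ τ, j ≤ j') → G.Adj i j then {i} else ∅ := by
  rw [C2set, Finsupp.support_single _ one_ne_zero, Finset.filter_singleton]

lemma C3set_single (σ : Finset (Fin n)) (i : Fin n) : C3set G σ (Finsupp.single i 1) = ∅ := by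
  simp [C3set]

lemma cMono_single_of_forall_lt {e : Cell n} (hb : IsBasisCell G e) (hτ : e.2.Nonempty)
    {i : Fin n} (h : ∀ j ∈ e.2, j < i) :
    cMono G k e (Finsupp.single i 1) = sym G k (e.1, insert i e.2) := by
  have hC1 : C1set e.2 (Finsupp.single i 1) = {i} := by rw [C1set_single, if_pos h]
  rw [cMono, if_pos hb, dif_pos hτ]
  simp [hC1, C3set_single]

lemma cMono_single_of_adj {σ : Finset (Fin n)} {t i : Fin n} (hb : IsBasisCell G (σ, {t}))
    (hσ : ∀ s ∈ σ, i < s) (hit : i < t) (hadj : G.Adj i t) :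
    cMono G k (σ, {t}) (Finsupp.single i 1) =
      ((-1 : k) ^ (σ.card + 1)) • sym G k (insert i σ, {t}) := by
  have hC2 : C2set G σ {t} (Finsupp.single i 1) = {i} := by
    rw [C2set_single, if_pos ⟨hσ, by simpa using hadj⟩]
  rw [cMono, if_pos hb, dif_pos (Finset.singleton_nonempty t)]
  simp [C1set_single, hC2, hit.not_gt, neg_one_pow_smul]

lemma cMono_single_eq_zero {e : Cell n} {i j : Fin n} (hj : j ∈ e.2) (hij : i < j)
    (hC2 : e.2.card = 1 → ∃ s ∈ e.1, s ≤ i) : cMono G k e (Finsupp.single i 1) = 0 := by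
  have hC1 : ¬ ∀ j ∈ e.2, j < i := fun h => (h j hj).not_gt hij
  by_cases hb : IsBasisCell G e
  · rw [cMono, if_pos hb, dif_pos ⟨j, hj⟩]
    by_cases hcard : e.2.card = 1
    · obtain ⟨s, hs, hsi⟩ := hC2 hcard
      have hC2' : ¬ ∀ s ∈ e.1, i < s := fun h => (h s hs).not_ge hsi
      simp [hcard, C1set_single, C2set_single, hC1, hC2']
    · simp [hcard, C1set_single, hC1]
  · exact cMono_of_not_isBasisCell G k hb _

lemma DvdSet_single_add_single {s t : Fin n} (hst : s < t) (hadj : G.Adj s t) :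
    DvdSet G (Finsupp.single s 1 + Finsupp.single t 1) = {(s, t)} := by
  have hmem : ∀ x, 1 ≤ (Finsupp.single s 1 + Finsupp.single t 1 : Fin n →₀ ℕ) x ↔
      x = s ∨ x = t := by
    intro x
    simp only [Finsupp.add_apply, Finsupp.single_apply]
    split_ifs <;> simp_all [eq_comm]
  ext ⟨x, y⟩
  simp only [DvdSet, Finset.mem_filter, Finset.mem_univ, true_and, hmem, Finset.mem_singleton,
    Prod.mk.injEq]
  constructor
  · rintro ⟨hxy, -, rfl | rfl, rfl | rfl⟩
    all_goals first | exact ⟨rfl, rfl⟩ | omega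
  · rintro ⟨rfl, rfl⟩
    exact ⟨hst, hadj, Or.inl rfl, Or.inr rfl⟩

lemma cZero_single_add_single {s t : Fin n} (hst : s < t) (hadj : G.Adj s t) :
    cZero G k (Finsupp.single s 1 + Finsupp.single t 1) = sym G k ({s}, {t}) := by
  simp [cZero, DvdSet_single_add_single G hst hadj, Finset.filter_singleton]

lemma Cmap_diffCell_of_card_eq_two {σ τ : Finset (Fin n)} (hb : IsBasisCell G (σ, τ))
    (hne : (σ, τ) ≠ ((∅, ∅) : Cell n)) (h2 : σ.card + τ.card = 2) :
    Cmap G k (diffCell G k (σ, τ)) = Finsupp.single (σ, τ) 1 := by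
  obtain ⟨hσ, hτ, -, hlt, hadj⟩ := hb.resolve_left hne
  dsimp only at hσ hτ hlt hadj
  have := hσ.card_pos
  have := hτ.card_pos
  obtain ⟨s, rfl⟩ := Finset.card_eq_one.mp (show σ.card = 1 by omega)
  obtain ⟨t, rfl⟩ := Finset.card_eq_one.mp (show τ.card = 1 by omega)
  have hst : s < t := hlt s (Finset.mem_singleton_self s) t (Finset.mem_singleton_self t)
  have hadj_st : G.Adj s t := hadj s (Finset.mem_singleton_self s) t
    (Finset.mem_singleton_self t) fun j hj => (Finset.mem_singleton.mp hj).ge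
  have hprod : ∏ i ∈ ({s} : Finset (Fin n)) ∪ {t}, (X i : MvPolynomial (Fin n) k) =
      monomial (Finsupp.single s 1 + Finsupp.single t 1) 1 := by
    rw [Finset.prod_union (Finset.disjoint_singleton.mpr hst.ne), Finset.prod_singleton,
      Finset.prod_singleton, X, X, monomial_mul, mul_one]
  rw [diffCell, if_pos hb, if_pos h2, hprod, sym_of_isBasisCell G k (isBasisCell_empty G),
    Finsupp.smul_single', mul_one, Cmap_single, one_smul, cMono_empty,
    cZero_single_add_single G k hst hadj_st, sym_of_isBasisCell G k hb]

lemma Cmap_diffCell_of_three_le {σ τ : Finset (Fin n)} (hb : IsBasisCell G (σ, τ))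
    (h3 : 3 ≤ σ.card + τ.card) :
    Cmap G k (diffCell G k (σ, τ)) =
      (∑ i ∈ σ, ((-1 : k) ^ (τ.card + (σ.filter fun j => i < j).card)) •
        cMono G k (σ.erase i, τ) (Finsupp.single i 1)) +
      ∑ i ∈ τ, ((-1 : k) ^ (τ.filter fun j => i < j).card) •
        cMono G k (σ, τ.erase i) (Finsupp.single i 1) := by
  rw [diffCell, if_pos hb, if_neg (show ¬ σ.card + τ.card = 2 by omega), if_pos h3, map_add,
    map_sum, map_sum]
  simp only [mul_smul, neg_one_pow_smul, map_smul, Cmap_X_smul_sym]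

lemma Cmap_diffCell_of_card_snd_eq_one {σ : Finset (Fin n)} {t : Fin n}
    (hb : IsBasisCell G (σ, {t})) (h2 : 2 ≤ σ.card) :
    Cmap G k (diffCell G k (σ, {t})) = Finsupp.single (σ, {t}) 1 := by
  have hσ : σ.Nonempty := Finset.card_pos.mp (by omega)
  obtain ⟨-, -, -, hlt, hadj⟩ := hb.resolve_left fun h => hσ.ne_empty (Prod.mk.inj h).1
  dsimp only at hlt hadj
  have hit : ∀ i ∈ σ, i < t := fun i hi => hlt i hi t (Finset.mem_singleton_self t)
  rw [Cmap_diffCell_of_three_le G k hb (by simp; omega), Finset.sum_singleton,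
    Finset.erase_singleton, cMono_of_not_isBasisCell G k (not_isBasisCell_of_snd_eq_empty G hσ),
    smul_zero, add_zero]
  set s := σ.min' hσ
  have hs : s ∈ σ := σ.min'_mem hσ
  rw [Finset.sum_eq_single_of_mem s hs fun i hi his => ?_]
  · have hfilter : σ.filter (fun j => s < j) = σ.erase s := by
      rw [← Finset.filter_ne']
      exact Finset.filter_congr fun j hj =>
        ⟨fun h => h.ne', fun h => lt_of_le_of_ne (σ.min'_le j hj) (Ne.symm h)⟩
    have hb' : IsBasisCell G (σ.erase s, {t}) :=
      hb.erase_fst G (Finset.card_pos.mp (by rw [Finset.card_erase_of_mem hs]; omega))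
    rw [cMono_single_of_adj G k hb' (fun j hj => σ.min'_lt_of_mem_erase_min' hσ hj) (hit s hs)
        (hadj s hs t (Finset.mem_singleton_self t) fun j hj => (Finset.mem_singleton.mp hj).ge),
      Finset.insert_erase hs, sym_of_isBasisCell G k hb, smul_smul, ← pow_add, hfilter,
      Finset.card_singleton, Finset.card_erase_of_mem hs,
      Even.neg_one_pow ⟨σ.card, by omega⟩, one_smul]
  · rw [cMono_single_eq_zero G k (Finset.mem_singleton_self t) (hit i hi)
        fun _ => ⟨s, Finset.mem_erase.mpr ⟨Ne.symm his, hs⟩, σ.min'_le i hi⟩, smul_zero]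

lemma Cmap_diffCell_of_two_le_card_snd {σ τ : Finset (Fin n)} (hb : IsBasisCell G (σ, τ))
    (hne : (σ, τ) ≠ ((∅, ∅) : Cell n)) (h2 : 2 ≤ τ.card) :
    Cmap G k (diffCell G k (σ, τ)) = Finsupp.single (σ, τ) 1 := by
  obtain ⟨⟨s₀, hs₀⟩, hτ, -, hlt, -⟩ := hb.resolve_left hne
  dsimp only at hs₀ hτ hlt
  rw [Cmap_diffCell_of_three_le G k hb (by have := Finset.card_pos.mpr ⟨s₀, hs₀⟩; omega)]
  set m := τ.max' hτ
  have hm : m ∈ τ := τ.max'_mem hτ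
  have hlt_m : ∀ i ∈ τ, i ≠ m → i < m := fun i hi him => lt_of_le_of_ne (τ.le_max' i hi) him
  rw [Finset.sum_eq_zero fun i hi => ?_, zero_add,
    Finset.sum_eq_single_of_mem m hm fun i hi him => ?_]
  · have hne' : (τ.erase m).Nonempty :=
      Finset.card_pos.mp (by rw [Finset.card_erase_of_mem hm]; omega)
    have hfilter : τ.filter (fun j => m < j) = ∅ :=
      Finset.filter_false_of_mem fun j hj => not_lt.mpr (τ.le_max' j hj)
    rw [cMono_single_of_forall_lt G k (hb.erase_max'_snd G hτ hne') hne'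
        fun j hj => hlt_m j (Finset.mem_of_mem_erase hj) (Finset.ne_of_mem_erase hj),
      Finset.insert_erase hm, sym_of_isBasisCell G k hb, hfilter, Finset.card_empty, pow_zero,
      one_smul]
  · rw [cMono_single_eq_zero G k (Finset.mem_erase.mpr ⟨Ne.symm him, hm⟩) (hlt_m i hi him)
        fun _ => ⟨s₀, hs₀, (hlt s₀ hs₀ i hi).le⟩, smul_zero]
  · rw [cMono_single_eq_zero G k hm (hlt i hi m hm) fun h => by dsimp only at h; omega, smul_zero]

lemma Cmap_diffCell {e : Cell n} (hb : IsBasisCell G e) (hne : e ≠ ((∅, ∅) : Cell n)) :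
    Cmap G k (diffCell G k e) = Finsupp.single e 1 := by
  obtain ⟨σ, τ⟩ := e
  have h2 := two_le_card_of_isBasisCell G hb hne
  have hτ := (hb.resolve_left hne).2.1.card_pos
  dsimp only at h2 hτ
  rcases (show σ.card + τ.card = 2 ∨ τ.card = 1 ∧ 2 ≤ σ.card ∨ 2 ≤ τ.card by omega)
    with h | ⟨h, hσ⟩ | h
  · exact Cmap_diffCell_of_card_eq_two G k hb hne h
  · obtain ⟨t, rfl⟩ := Finset.card_eq_one.mp h
    exact Cmap_diffCell_of_card_snd_eq_one G k hb hσ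
  · exact Cmap_diffCell_of_two_le_card_snd G k hb hne h

lemma biext_zero_left (bf : Cell n → Cell n → Ftot n k) (g : Ftot n k) : biext k bf 0 g = 0 := by
  simp [biext]

lemma biext_zero_right (bf : Cell n → Cell n → Ftot n k) (f : Ftot n k) :
    biext k bf f 0 = 0 := by
  simp [biext]

lemma biext_single_left {bf : Cell n → Cell n → Ftot n k} {x : Cell n} {g : Ftot n k}
    (h : ∀ e ∈ g.support, bf x e = Finsupp.single e 1) : biext k bf (Finsupp.single x 1) g = g := by
  rw [biext, Finsupp.support_single _ one_ne_zero, Finset.sum_singleton]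
  conv_rhs => rw [← Finsupp.sum_single g]
  refine Finset.sum_congr rfl fun e he => ?_
  rw [Finsupp.single_eq_same, one_mul, h e he, Finsupp.smul_single_one]

lemma biext_single_right {bf : Cell n → Cell n → Ftot n k} {x : Cell n} {f : Ftot n k}
    (h : ∀ e ∈ f.support, bf e x = Finsupp.single e 1) : biext k bf f (Finsupp.single x 1) = f := by
  conv_rhs => rw [← Finsupp.sum_single f]
  refine Finset.sum_congr rfl fun e he => ?_
  rw [Finsupp.support_single _ one_ne_zero, Finset.sum_singleton, Finsupp.single_eq_same,
    mul_one, h e he, Finsupp.smul_single_one]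

lemma diffCell_mem_supported (e : Cell n) :
    diffCell G k e ∈ Finsupp.supported (MvPolynomial (Fin n) k) (MvPolynomial (Fin n) k)
      {e' | IsBasisCell G e' ∧ cellDeg e' + 1 = cellDeg e} := by
  rw [diffCell]
  split_ifs with _ h2
  · refine Submodule.smul_mem _ _ (sym_mem_supported G k fun _ => ⟨isBasisCell_empty G, ?_⟩)
    simp [cellDeg, h2]
  · refine add_mem (Submodule.sum_mem _ fun i hi => Submodule.smul_mem _ _
      (sym_mem_supported G k fun hb' => ⟨hb', ?_⟩))
      (Submodule.sum_mem _ fun i hi => Submodule.smul_mem _ _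
      (sym_mem_supported G k fun hb' => ⟨hb', ?_⟩))
    all_goals
      have := Finset.card_pos.mpr ⟨i, hi⟩
      simp only [cellDeg, Finset.card_erase_of_mem hi]
      omega
  all_goals exact zero_mem _

lemma bstar_unit (N : ℕ) (e : Cell n) (hb : IsBasisCell G e) (hN : cellDeg e < N) :
    bstar G k N ((∅, ∅) : Cell n) e = Finsupp.single e 1 ∧
      bstar G k N e ((∅, ∅) : Cell n) = Finsupp.single e 1 := by
  induction N generalizing e with
  | zero => omega
  | succ N ih =>
    by_cases he : e = ((∅, ∅) : Cell n)
    · subst he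
      simp [bstar, cellDeg]
    have hdeg : cellDeg e ≠ 0 := by
      have := two_le_card_of_isBasisCell G hb he
      simp only [cellDeg]
      omega
    have hsupp : ∀ e' ∈ (diffCell G k e).support,
        bstar G k N ((∅, ∅) : Cell n) e' = Finsupp.single e' 1 ∧
          bstar G k N e' ((∅, ∅) : Cell n) = Finsupp.single e' 1 := fun e' he' =>
      have ⟨hb', hdeg'⟩ := (Finsupp.mem_supported _ _).mp (diffCell_mem_supported G k e) he'
      ih e' hb' (by omega)
    simp only [bstar, cellDeg_empty, add_zero, zero_add, if_neg hdeg, Dmap_single, one_smul,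
      diffCell_empty, biext_zero_left, biext_zero_right, map_zero, smul_zero, pow_zero]
    exact ⟨by rw [biext_single_left k fun e' he' => (hsupp e' he').1, Cmap_diffCell G k hb he],
      by rw [biext_single_right k fun e' he' => (hsupp e' he').2, Cmap_diffCell G k hb he]⟩

lemma isBasisCell_of_mem_support_of_mem_Fsub {p : ℕ} {f : Ftot n k} (hf : f ∈ Fsub G k p)
    {e : Cell n} (he : e ∈ f.support) : IsBasisCell G e := by
  have hle : Fsub G k p ≤ Finsupp.supported _ _ {e | IsBasisCell G e} :=
    Submodule.span_le.mpr fun _ ⟨e, ⟨hb, _⟩, hf⟩ => hf ▸ Finsupp.single_mem_supported _ _ hb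
  exact (Finsupp.mem_supported _ _).mp (hle hf) he

theorem stmt9_general (n : ℕ) (a b : Fin n → ℝ)
    (k : Type) [Field k]
    (p : ℕ) (f : Ftot n k) (hf : f ∈ Fsub (cigraph n a b) k p) :
    pstar (cigraph n a b) k (Finsupp.single ((∅, ∅) : Cell n) 1) f = f ∧
    pstar (cigraph n a b) k f (Finsupp.single ((∅, ∅) : Cell n) 1) = f := by
  have hunit : ∀ e ∈ f.support, _ := fun e he => bstar_unit (cigraph n a b) k (4 * n + 4) e
    (isBasisCell_of_mem_support_of_mem_Fsub _ k hf he) (cellDeg_lt e)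
  exact ⟨biext_single_left k fun e he => (hunit e he).1,
    biext_single_right k fun e he => (hunit e he).2⟩

theorem stmt9 (n : ℕ) (hn : 1 ≤ n) (a b : Fin n → ℝ)
    (hab : ∀ i, a i ≤ b i) (hmono : ∀ i j : Fin n, i < j → a i ≤ a j)
    (k : Type) [Field k]
    (p : ℕ) (f : Ftot n k) (hf : f ∈ Fsub (cigraph n a b) k p) :
    pstar (cigraph n a b) k (Finsupp.single ((∅, ∅) : Cell n) 1) f = f ∧
    pstar (cigraph n a b) k f (Finsupp.single ((∅, ∅) : Cell n) 1) = f :=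
  stmt9_general n a b k p f hf

end EdgeRes
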